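/- Let S = ⟨g_1, g_2, g_3⟩ be a numerical semigroup minimally generated by three elements g_1 < g_2 < g_3. If every ω ∈ Ap(S) satisfies ω ⪯_M f + m (S is M-pure symmetric), then f + m has a unique maximal representation, and consequently Ap(S) is β-rectangular. -/

import Mathlib

open Finset

/-- `S` is a numerical semigroup: a submonoid of `(ℕ, +)` with finite complement. -/
def IsNumSgp (S : Set ℕ) : Prop :=
  0 ∈ S ∧ (∀ a ∈ S, ∀ b ∈ S, a + b ∈ S) ∧ (Sᶜ : Set ℕ).Finite

/-- `s` belongs to the Apéry set of `S` with respect to `m`: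
`s ∈ S` and `s - m ∉ S` (i.e. no `u ∈ S` with `u + m = s`). -/
def InApery (S : Set ℕ) (m s : ℕ) : Prop :=
  s ∈ S ∧ ∀ u ∈ S, u + m ≠ s

def AperySet (S : Set ℕ) (m : ℕ) : Set ℕ := {s | InApery S m s}

/-- `ordS S s` is the largest `h` such that `s` is a sum of `h` nonzero elements of `S`. -/
noncomputable def ordS (S : Set ℕ) (s : ℕ) : ℕ :=
  sSup {h : ℕ | ∃ f : Fin h → ℕ, (∀ j, f j ∈ S ∧ f j ≠ 0) ∧ ∑ j, f j = s}

/-- `g` generates `S`. -/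
def Generates (S : Set ℕ) {ν : ℕ} (g : Fin ν → ℕ) : Prop :=
  ∀ s, s ∈ S ↔ ∃ lam : Fin ν → ℕ, ∑ i, lam i * g i = s

/-- `g` is a minimal generating system of `S`: it generates `S`
and no `g i` is generated by the remaining generators. -/
def MinimalGen (S : Set ℕ) {ν : ℕ} (g : Fin ν → ℕ) : Prop :=
  Generates S g ∧ ∀ i, ¬ ∃ lam : Fin ν → ℕ, lam i = 0 ∧ ∑ j, lam j * g j = g i

/-- `lam` is a maximal representation of `s`: the coefficient sum equals `ordS S s`. -/
def IsMaxRep (S : Set ℕ) {ν : ℕ} (g : Fin ν → ℕ) (lam : Fin ν → ℕ) (s : ℕ) : Prop :=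
  ∑ i, lam i * g i = s ∧ ∑ i, lam i = ordS S s

/-- `s` has a unique maximal representation. -/
def UniqueMaxRep (S : Set ℕ) {ν : ℕ} (g : Fin ν → ℕ) (s : ℕ) : Prop :=
  ∃! lam : Fin ν → ℕ, IsMaxRep S g lam s

/-- `β_i = max {h | h g_i ∈ Ap(S) and ord(h g_i) = h}`. -/
noncomputable def betaN (S : Set ℕ) (m : ℕ) {ν : ℕ} (g : Fin ν → ℕ) (i : Fin ν) : ℕ :=
  sSup {h : ℕ | InApery S m (h * g i) ∧ ordS S (h * g i) = h}

/-- `γ_i = max {h | h g_i ∈ Ap(S), ord(h g_i) = h and h g_i has a unique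
maximal representation}`. -/
noncomputable def gammaN (S : Set ℕ) (m : ℕ) {ν : ℕ} (g : Fin ν → ℕ) (i : Fin ν) : ℕ :=
  sSup {h : ℕ | InApery S m (h * g i) ∧ ordS S (h * g i) = h ∧ UniqueMaxRep S g (h * g i)}

/-- `B = {Σ_{i≥2} λ_i g_i : 0 ≤ λ_i ≤ β_i}`. -/
def Bset (S : Set ℕ) (m : ℕ) {ν : ℕ} [NeZero ν] (g : Fin ν → ℕ) : Set ℕ :=
  {s | ∃ lam : Fin ν → ℕ, lam 0 = 0 ∧ (∀ i, lam i ≤ betaN S m g i) ∧ ∑ i, lam i * g i = s}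

/-- `Γ = {Σ_{i≥2} λ_i g_i : 0 ≤ λ_i ≤ γ_i}`. -/
def GammaSet (S : Set ℕ) (m : ℕ) {ν : ℕ} [NeZero ν] (g : Fin ν → ℕ) : Set ℕ :=
  {s | ∃ lam : Fin ν → ℕ, lam 0 = 0 ∧ (∀ i, lam i ≤ gammaN S m g i) ∧ ∑ i, lam i * g i = s}

/-- `s ⪯_M t`. -/
def predM (S : Set ℕ) (s t : ℕ) : Prop :=
  ∃ u ∈ S, s + u = t ∧ ordS S s + ordS S u = ordS S t

/-! If `ω ⪯_M t` via `u`, a maximal representation of `ω` plus one of `u` is a maximal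
representation of `t`. So when `t = f + m` has a unique maximal representation `Λ`, every maximal
representation of an Apéry element lies below `Λ`. Conversely every `λ ≤ Λ` is a maximal
representation of an Apéry element, because `λ + (Λ - λ)` represents `t` maximally and the
Apéry set is closed under taking summands. Hence `β_i = Λ_i` and
`Ap(S) = {Σ λ_i g_i : λ ≤ Λ, λ_1 = 0}`.

With three generators the maximal representation of `f + m` is unique: an Apéry element has no
`g₁` coefficient, and two representations `λ₂ g₂ + λ₃ g₃` with equal coefficient sums differ by a
multiple of `g₃ - g₂`. -/

section Representations

variable {S : Set ℕ} {ν : ℕ} {g : Fin ν → ℕ}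

theorem sum_add_mul (lam mu : Fin ν → ℕ) :
    ∑ i, (lam + mu) i * g i = ∑ i, lam i * g i + ∑ i, mu i * g i := by
  simp only [Pi.add_apply, add_mul, sum_add_distrib]

theorem sum_single_mul (i : Fin ν) (c : ℕ) :
    ∑ j, (Pi.single i c : Fin ν → ℕ) j * g j = c * g i := by
  simp [Pi.single_apply, ite_mul]

theorem single_le_of_le_apply {lam : Fin ν → ℕ} {i : Fin ν} {c : ℕ} (h : c ≤ lam i) :
    Pi.single i c ≤ lam := fun j => by
  rcases eq_or_ne j i with rfl | hj <;> simp [*]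

theorem Generates.sum_mem (hgen : Generates S g) (lam : Fin ν → ℕ) : ∑ i, lam i * g i ∈ S :=
  (hgen _).2 ⟨lam, rfl⟩

theorem Generates.mem (hgen : Generates S g) (i : Fin ν) : g i ∈ S := by
  simpa [sum_single_mul] using hgen.sum_mem (Pi.single i 1)

theorem bddAbove_lengths (s : ℕ) :
    BddAbove {h : ℕ | ∃ f : Fin h → ℕ, (∀ j, f j ∈ S ∧ f j ≠ 0) ∧ ∑ j, f j = s} := by
  refine ⟨s, fun h ⟨f, hf, hsum⟩ => ?_⟩
  calc h = ∑ _j : Fin h, 1 := by simp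
    _ ≤ ∑ j, f j := sum_le_sum fun j _ => Nat.one_le_iff_ne_zero.2 (hf j).2
    _ = s := hsum

theorem Generates.sum_mem_lengths (hgen : Generates S g) (hg : ∀ i, g i ≠ 0)
    (lam : Fin ν → ℕ) :
    ∑ i, lam i ∈ {h : ℕ | ∃ f : Fin h → ℕ, (∀ j, f j ∈ S ∧ f j ≠ 0) ∧
      ∑ j, f j = ∑ i, lam i * g i} := by
  refine ⟨fun j => g (finSigmaFinEquiv.symm j).1, fun j => ⟨hgen.mem _, hg _⟩, ?_⟩
  rw [finSigmaFinEquiv.symm.sum_comp (fun p => g p.1), Fintype.sum_sigma]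
  simp

theorem Generates.sum_le_ordS (hgen : Generates S g) (hg : ∀ i, g i ≠ 0) (lam : Fin ν → ℕ) :
    ∑ i, lam i ≤ ordS S (∑ i, lam i * g i) :=
  le_csSup (bddAbove_lengths _) (hgen.sum_mem_lengths hg lam)

theorem Generates.exists_sum_mul_eq_of_lengths (hgen : Generates S g) {h s : ℕ}
    (f : Fin h → ℕ) (hf : ∀ j, f j ∈ S ∧ f j ≠ 0) (hsum : ∑ j, f j = s) :
    ∃ lam : Fin ν → ℕ, ∑ i, lam i * g i = s ∧ h ≤ ∑ i, lam i := by
  choose mu hmu using fun j => (hgen (f j)).1 (hf j).1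
  refine ⟨∑ j, mu j, ?_, ?_⟩
  · simp only [Finset.sum_apply, Finset.sum_mul]
    rw [Finset.sum_comm, ← hsum]
    exact sum_congr rfl fun j _ => hmu j
  · have hpos : ∀ j, 1 ≤ ∑ i, mu j i := fun j => Nat.one_le_iff_ne_zero.2 fun hz => by
      rw [sum_eq_zero_iff] at hz
      exact (hf j).2 (by simp [← hmu j, hz])
    calc h = ∑ _j : Fin h, 1 := by simp
      _ ≤ ∑ j, ∑ i, mu j i := sum_le_sum fun j _ => hpos j
      _ = ∑ i, (∑ j, mu j) i := by simp only [Finset.sum_apply]; exact sum_comm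

theorem Generates.exists_isMaxRep (hgen : Generates S g) (hg : ∀ i, g i ≠ 0) {s : ℕ}
    (hs : s ∈ S) : ∃ lam, IsMaxRep S g lam s := by
  obtain ⟨lam₀, rfl⟩ := (hgen _).1 hs
  obtain ⟨f, hf, hsum⟩ := Nat.sSup_mem ⟨_, hgen.sum_mem_lengths hg lam₀⟩ (bddAbove_lengths _)
  obtain ⟨lam, hlam, hle⟩ := hgen.exists_sum_mul_eq_of_lengths f hf hsum
  exact ⟨lam, hlam, le_antisymm (hlam ▸ hgen.sum_le_ordS hg lam) hle⟩

theorem IsMaxRep.add {lam mu : Fin ν → ℕ} {s u : ℕ} (hlam : IsMaxRep S g lam s)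
    (hmu : IsMaxRep S g mu u) (hord : ordS S s + ordS S u = ordS S (s + u)) :
    IsMaxRep S g (lam + mu) (s + u) :=
  ⟨by rw [sum_add_mul, hlam.1, hmu.1],
    by simp only [Pi.add_apply, sum_add_distrib, hlam.2, hmu.2, hord]⟩

theorem IsMaxRep.of_le (hgen : Generates S g) (hg : ∀ i, g i ≠ 0) {Λ lam : Fin ν → ℕ} {t : ℕ}
    (hΛ : IsMaxRep S g Λ t) (hle : lam ≤ Λ) : IsMaxRep S g lam (∑ i, lam i * g i) := by
  refine ⟨rfl, le_antisymm (hgen.sum_le_ordS hg lam) ?_⟩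
  obtain ⟨mu, hmu, hmun⟩ := hgen.exists_isMaxRep hg (hgen.sum_mem lam)
  obtain ⟨d, rfl⟩ : ∃ d, Λ = lam + d := ⟨Λ - lam, (add_tsub_cancel_of_le hle).symm⟩
  have key := hgen.sum_le_ordS hg (mu + d)
  rw [sum_add_mul, hmu, ← sum_add_mul, hΛ.1, ← hΛ.2] at key
  simp only [Pi.add_apply, sum_add_distrib, hmun] at key
  omega

theorem IsMaxRep.le_of_predM (hgen : Generates S g) (hg : ∀ i, g i ≠ 0)
    {Λ lam : Fin ν → ℕ} {ω t : ℕ} (huniq : ∀ mu, IsMaxRep S g mu t → mu = Λ)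
    (hlam : IsMaxRep S g lam ω) (hpred : predM S ω t) : lam ≤ Λ := by
  obtain ⟨u, hu, rfl, hord⟩ := hpred
  obtain ⟨mu, hmu⟩ := hgen.exists_isMaxRep hg hu
  rw [← huniq _ (hlam.add hmu hord)]
  exact fun i => Nat.le_add_right _ _

end Representations

section Apery

variable {S : Set ℕ}

theorem InApery.of_add (hadd : ∀ a ∈ S, ∀ b ∈ S, a + b ∈ S) {m s u : ℕ}
    (h : InApery S m (s + u)) (hs : s ∈ S) (hu : u ∈ S) : InApery S m s :=
  ⟨hs, fun v hv hvs => h.2 (v + u) (hadd v hv u hu) (by omega)⟩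

theorem inApery_add_of_frobenius {f m : ℕ} (hf : f ∉ S) (hfmax : ∀ n, f < n → n ∈ S)
    (hm : 0 < m) : InApery S m (f + m) :=
  ⟨hfmax _ (by omega), fun u hu h => hf (by rwa [show u = f by omega] at hu)⟩

theorem InApery.coeff_eq_zero {ν : ℕ} {g : Fin ν → ℕ} (hgen : Generates S g) {i : Fin ν}
    {ω : ℕ} (hω : InApery S (g i) ω) {lam : Fin ν → ℕ} (hlam : ∑ j, lam j * g j = ω) :
    lam i = 0 := by
  by_contra h
  obtain ⟨lam', rfl⟩ : ∃ lam' : Fin ν → ℕ, lam = lam' + Pi.single i 1 :=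
    ⟨_, (tsub_add_cancel_of_le (single_le_of_le_apply (Nat.one_le_iff_ne_zero.2 h))).symm⟩
  rw [sum_add_mul, sum_single_mul, one_mul] at hlam
  exact hω.2 _ (hgen.sum_mem lam') hlam

end Apery

section MPure

variable {S : Set ℕ} {ν : ℕ} {g : Fin ν → ℕ} {Λ : Fin ν → ℕ} {m t : ℕ}

theorem inApery_sum_of_le (hadd : ∀ a ∈ S, ∀ b ∈ S, a + b ∈ S) (hgen : Generates S g)
    (ht : InApery S m t) (hΛ : ∑ i, Λ i * g i = t) {lam : Fin ν → ℕ} (hle : lam ≤ Λ) :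
    InApery S m (∑ i, lam i * g i) := by
  obtain ⟨d, rfl⟩ : ∃ d, Λ = lam + d := ⟨Λ - lam, (add_tsub_cancel_of_le hle).symm⟩
  rw [← hΛ, sum_add_mul] at ht
  exact ht.of_add hadd (hgen.sum_mem lam) (hgen.sum_mem d)

theorem betaN_eq_of_forall_predM (hadd : ∀ a ∈ S, ∀ b ∈ S, a + b ∈ S) (hgen : Generates S g)
    (hg : ∀ i, g i ≠ 0) (ht : InApery S m t) (hΛ : IsMaxRep S g Λ t)
    (huniq : ∀ mu, IsMaxRep S g mu t → mu = Λ) (hpure : ∀ ω, InApery S m ω → predM S ω t)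
    (i : Fin ν) : betaN S m g i = Λ i := by
  have hsingle : ∀ c, IsMaxRep S g (Pi.single i c) (c * g i) ↔ ordS S (c * g i) = c := by
    simp [IsMaxRep, sum_single_mul, eq_comm]
  have hle : Pi.single i (Λ i) ≤ Λ := single_le_of_le_apply le_rfl
  refine IsGreatest.csSup_eq ⟨⟨?_, (hsingle _).1 ?_⟩, fun h ⟨hAp, hord⟩ => ?_⟩
  · simpa [sum_single_mul] using inApery_sum_of_le hadd hgen ht hΛ.1 hle
  · simpa [sum_single_mul] using hΛ.of_le hgen hg hle
  · simpa using ((hsingle h).2 hord).le_of_predM hgen hg huniq (hpure _ hAp) i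

theorem aperySet_eq_Bset_of_forall_predM [NeZero ν] (hadd : ∀ a ∈ S, ∀ b ∈ S, a + b ∈ S)
    (hgen : Generates S g) (hg : ∀ i, g i ≠ 0) (ht : InApery S (g 0) t) (hΛ : IsMaxRep S g Λ t)
    (huniq : ∀ mu, IsMaxRep S g mu t → mu = Λ) (hpure : ∀ ω, InApery S (g 0) ω → predM S ω t) :
    AperySet S (g 0) = Bset S (g 0) g := by
  have hβ := betaN_eq_of_forall_predM hadd hgen hg ht hΛ huniq hpure
  ext s
  constructor
  · intro hs
    obtain ⟨lam, hlam⟩ := hgen.exists_isMaxRep hg hs.1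
    refine ⟨lam, hs.coeff_eq_zero hgen hlam.1, fun i => ?_, hlam.1⟩
    exact hβ i ▸ hlam.le_of_predM hgen hg huniq (hpure s hs) i
  · rintro ⟨lam, -, hle, rfl⟩
    exact inApery_sum_of_le hadd hgen ht hΛ.1 fun i => (hle i).trans (hβ i).le

end MPure

theorem eq_and_eq_of_mul_add_mul_eq {x y a b c d : ℕ} (hxy : x ≠ y)
    (h : a * x + b * y = c * x + d * y) (hsum : a + b = c + d) : a = c ∧ b = d := by
  have hprod : ((a : ℤ) - c) * ((x : ℤ) - y) = 0 := by
    zify at h hsum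
    linear_combination h - (y : ℤ) * hsum
  rcases mul_eq_zero.1 hprod with hac | hxy_eq
  · omega
  · exact absurd (by omega) hxy

theorem InApery.uniqueMaxRep_of_fin_three {S : Set ℕ} {g : Fin 3 → ℕ} (hgen : Generates S g)
    (hg : ∀ i, g i ≠ 0) (h12 : g 1 ≠ g 2) {ω : ℕ} (hω : InApery S (g 0) ω) :
    UniqueMaxRep S g ω := by
  obtain ⟨Λ, hΛ⟩ := hgen.exists_isMaxRep hg hω.1
  refine ⟨Λ, hΛ, fun lam hlam => ?_⟩
  have h0 := hω.coeff_eq_zero hgen hlam.1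
  have hΛ0 := hω.coeff_eq_zero hgen hΛ.1
  have hval := hlam.1.trans hΛ.1.symm
  have hsum := hlam.2.trans hΛ.2.symm
  simp only [Fin.sum_univ_three, h0, hΛ0, zero_mul, zero_add] at hval hsum
  obtain ⟨h1, h2⟩ := eq_and_eq_of_mul_add_mul_eq h12 hval hsum
  funext i
  fin_cases i <;> simp [h0, hΛ0, h1, h2]

theorem three_gen_Mpure_symmetric_betaRect_general (S : Set ℕ) (g : Fin 3 → ℕ)
    (hS : IsNumSgp S) (hgen : MinimalGen S g) (hmono : StrictMono g)
    (hmpos : 0 < g 0)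
    (f : ℕ) (hf : f ∉ S) (hfmax : ∀ n, f < n → n ∈ S)
    (hMpure : ∀ ω, InApery S (g 0) ω → predM S ω (f + g 0)) :
    UniqueMaxRep S g (f + g 0) ∧ AperySet S (g 0) = Bset S (g 0) g := by
  have hg : ∀ i, g i ≠ 0 := fun i => (hmpos.trans_le (hmono.monotone (Fin.zero_le i))).ne'
  have ht : InApery S (g 0) (f + g 0) := inApery_add_of_frobenius hf hfmax hmpos
  have hunique := ht.uniqueMaxRep_of_fin_three hgen.1 hg (hmono.injective.ne (by decide))
  refine ⟨hunique, ?_⟩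
  obtain ⟨Λ, hΛ, huniq⟩ := hunique
  exact aperySet_eq_Bset_of_forall_predM hS.2.1 hgen.1 hg ht hΛ huniq hMpure

theorem three_gen_Mpure_symmetric_betaRect (S : Set ℕ) (g : Fin 3 → ℕ)
    (hS : IsNumSgp S) (hgen : MinimalGen S g) (hmono : StrictMono g)
    (hmpos : 0 < g 0) (hmul : ∀ s ∈ S, s ≠ 0 → g 0 ≤ s)
    (f : ℕ) (hf : f ∉ S) (hfmax : ∀ n, f < n → n ∈ S)
    (hMpure : ∀ ω, InApery S (g 0) ω → predM S ω (f + g 0)) :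
    UniqueMaxRep S g (f + g 0) ∧ AperySet S (g 0) = Bset S (g 0) g :=
  three_gen_Mpure_symmetric_betaRect_general S g hS hgen hmono hmpos f hf hfmax hMpure
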